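/- Let D be the unit disk, λ > max(1/|D|, 2Ω), and let w^λ = λ1_{A^λ} be a maximizer of ℰ over K_λ(D), with stream function ψ^λ = Gw^λ + (Ω/2)|x|² - μ^λ. Then the kinetic energy of the vortex core T(w^λ) = (1/2)∫_D |∇ψ^λ_+|² dx is bounded above by a constant independent of λ. -/

import Mathlib

open MeasureTheory Real Set Filter Topology ENNReal
noncomputable section
abbrev E2 := EuclideanSpace ℝ (Fin 2)
def diskD : Set E2 := Metric.ball 0 1
def greenh (x y : E2) : ℝ := -(1/(2*π)) * Real.log ‖y‖ - (1/(2*π)) * Real.log ‖x - (‖y‖^2)⁻¹ • y‖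
def greenG (x y : E2) : ℝ := -(1/(2*π)) * Real.log ‖x - y‖ - greenh x y
def muD : Measure E2 := volume.restrict diskD
def Kset (lam : ℝ) : Set (E2 → ℝ) :=
  {w | AEMeasurable w muD ∧ (∀ᵐ x ∂muD, 0 ≤ w x ∧ w x ≤ lam) ∧ ∫ x, w x ∂muD = 1}
def Efun (w : E2 → ℝ) : ℝ := (1/2) * ∫ x in diskD, ∫ y in diskD, greenG x y * w x * w y
def calE (Ω : ℝ) (w : E2 → ℝ) : ℝ := Efun w + (Ω/2) * ∫ x in diskD, ‖x‖^2 * w x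
/-- The stream function ψ^λ = Gw + (Ω/2)|x|² - μ^λ. -/
def psiFun (Ω mulam : ℝ) (w : E2 → ℝ) (x : E2) : ℝ :=
  (∫ y in diskD, greenG x y * w y) + (Ω/2) * ‖x‖^2 - mulam
/-- partial derivative in the i-th coordinate direction -/
def pd (i : Fin 2) (f : E2 → ℝ) (x : E2) : ℝ := fderiv ℝ f x (EuclideanSpace.single i 1)
/-- Kinetic energy of the vortex core: T = (1/2)∫_D |∇ψ⁺|². -/
def coreT (Ω mulam : ℝ) (w : E2 → ℝ) : ℝ :=
  (1/2) * ∫ x in diskD,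
    ((pd 0 (fun z => max (psiFun Ω mulam w z) 0) x)^2 +
     (pd 1 (fun z => max (psiFun Ω mulam w z) 0) x)^2)

open Metric

lemma finrank_E2 : Module.finrank ℝ E2 = 2 := finrank_euclideanSpace_fin

lemma meas_inv_norm : Measurable (fun y : E2 => ‖y‖⁻¹) := measurable_norm.inv

instance : IsFiniteMeasure muD := by
  constructor
  rw [muD, Measure.restrict_apply_univ]
  exact measure_ball_lt_top

lemma integrableOn_inv_norm_ball_one :
    IntegrableOn (fun y : E2 => ‖y‖⁻¹) (ball 0 1) volume := by
  refine ⟨meas_inv_norm.aestronglyMeasurable, ?_⟩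
  rw [hasFiniteIntegral_iff_norm]
  have hnn : ∀ y : E2, ‖(‖y‖⁻¹)‖ = ‖y‖⁻¹ := fun y => by
    rw [Real.norm_eq_abs, abs_of_nonneg (by positivity)]
  simp only [hnn]
  set κ : ℝ≥0∞ := volume (ball (0:E2) 1) with hκ
  have hκtop : κ ≠ ⊤ := measure_ball_lt_top.ne
  have key := lintegral_eq_lintegral_meas_lt (volume.restrict (ball (0:E2) 1))
      (f := fun y : E2 => ‖y‖⁻¹) (Eventually.of_forall fun y => by positivity)
      meas_inv_norm.aemeasurable
  rw [key]
  have hsub : Ioi (0:ℝ) ⊆ Ioc 0 1 ∪ Ioi 1 := by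
    intro t ht
    rcases le_or_gt t 1 with h | h
    · exact Or.inl ⟨ht, h⟩
    · exact Or.inr h
  have hres : ∀ s : Set E2, volume.restrict (ball (0:E2) 1) s ≤ κ := by
    intro s
    calc volume.restrict (ball (0:E2) 1) s ≤ volume.restrict (ball (0:E2) 1) univ :=
          measure_mono (subset_univ s)
      _ = κ := by rw [Measure.restrict_apply_univ]
  calc ∫⁻ t in Ioi (0:ℝ), volume.restrict (ball (0:E2) 1) {a | t < ‖a‖⁻¹}
      ≤ ∫⁻ t in Ioc (0:ℝ) 1 ∪ Ioi 1, volume.restrict (ball (0:E2) 1) {a | t < ‖a‖⁻¹} :=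
        lintegral_mono_set hsub
    _ ≤ (∫⁻ t in Ioc (0:ℝ) 1, volume.restrict (ball (0:E2) 1) {a | t < ‖a‖⁻¹})
        + ∫⁻ t in Ioi (1:ℝ), volume.restrict (ball (0:E2) 1) {a | t < ‖a‖⁻¹} :=
        lintegral_union_le _ _ _
    _ < ⊤ := by
        have h1 : (∫⁻ t in Ioc (0:ℝ) 1, volume.restrict (ball (0:E2) 1) {a | t < ‖a‖⁻¹})
            ≤ κ * 1 := by
          calc (∫⁻ t in Ioc (0:ℝ) 1, volume.restrict (ball (0:E2) 1) {a | t < ‖a‖⁻¹})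
              ≤ ∫⁻ _t in Ioc (0:ℝ) 1, κ := lintegral_mono fun t => hres _
            _ = κ * volume (Ioc (0:ℝ) 1) := setLIntegral_const _ _
            _ = κ * 1 := by rw [Real.volume_Ioc]; norm_num
        have h2 : (∫⁻ t in Ioi (1:ℝ), volume.restrict (ball (0:E2) 1) {a | t < ‖a‖⁻¹})
            ≤ (∫⁻ t in Ioi (1:ℝ), ENNReal.ofReal (t ^ (-2:ℝ))) * κ := by
          rw [← lintegral_mul_const _ (by fun_prop : Measurable fun t : ℝ => ENNReal.ofReal (t ^ (-2:ℝ)))]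
          refine setLIntegral_mono (by fun_prop) fun t ht => ?_
          have ht1 : (1:ℝ) < t := ht
          have ht0 : (0:ℝ) < t := lt_trans one_pos ht1
          have hsubset : {a : E2 | t < ‖a‖⁻¹} ⊆ ball 0 t⁻¹ := by
            intro a ha
            have ha' : t < ‖a‖⁻¹ := ha
            have hna : ‖a‖ ≠ 0 := by
              intro h0
              rw [h0] at ha'
              simp at ha'
              linarith
            have hna' : 0 < ‖a‖ := lt_of_le_of_ne (norm_nonneg a) (Ne.symm hna)
            have : (‖a‖⁻¹)⁻¹ < t⁻¹ := by
              apply inv_strictAnti₀ ht0 ha'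
            rw [inv_inv] at this
            rwa [mem_ball_zero_iff]
          calc volume.restrict (ball (0:E2) 1) {a : E2 | t < ‖a‖⁻¹}
              ≤ volume {a : E2 | t < ‖a‖⁻¹} := Measure.restrict_le_self _
            _ ≤ volume (ball (0:E2) t⁻¹) := measure_mono hsubset
            _ = ENNReal.ofReal (t⁻¹ ^ Module.finrank ℝ E2) * κ :=
                Measure.addHaar_ball _ _ (by positivity)
            _ = ENNReal.ofReal (t ^ (-2:ℝ)) * κ := by
                rw [finrank_E2]
                congr 1
                rw [inv_pow, Real.rpow_neg ht0.le]
                congr 1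
                rw [← Real.rpow_natCast t 2]
                norm_num
        have hfin : (∫⁻ t in Ioi (1:ℝ), ENNReal.ofReal (t ^ (-2:ℝ))) < ⊤ := by
          have hint : IntegrableOn (fun t : ℝ => t ^ (-2:ℝ)) (Ioi 1) volume :=
            integrableOn_Ioi_rpow_of_lt (by norm_num) one_pos
          have := hint.2
          rw [hasFiniteIntegral_iff_norm] at this
          refine lt_of_le_of_lt (lintegral_mono fun t => ?_) this
          exact ENNReal.ofReal_le_ofReal (le_abs_self _)
        calc _ ≤ κ * 1 + (∫⁻ t in Ioi (1:ℝ), ENNReal.ofReal (t ^ (-2:ℝ))) * κ := add_le_add h1 h2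
          _ < ⊤ := by
              apply ENNReal.add_lt_top.2
              constructor
              · exact ENNReal.mul_lt_top measure_ball_lt_top (by norm_num)
              · exact ENNReal.mul_lt_top hfin measure_ball_lt_top

def c₀ : ℝ := ∫ y in ball (0:E2) 1, ‖y‖⁻¹

lemma c₀_nonneg : 0 ≤ c₀ :=
  setIntegral_nonneg measurableSet_ball fun y _ => by positivity

lemma inv_norm_ball_scale (r : ℝ) (hr : 0 < r) :
    IntegrableOn (fun y : E2 => ‖y‖⁻¹) (ball 0 r) volume ∧
    ∫ y in ball (0:E2) r, ‖y‖⁻¹ = r * c₀ := by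
  set g : E2 → ℝ := (ball (0:E2) 1).indicator (fun y => ‖y‖⁻¹) with hgdef
  have hg : Integrable g volume :=
    (integrable_indicator_iff measurableSet_ball).2 integrableOn_inv_norm_ball_one
  have hcomp : ∀ y : E2, g (r⁻¹ • y)
      = r * (ball (0:E2) r).indicator (fun y => ‖y‖⁻¹) y := by
    intro y
    simp only [hgdef]
    have hmem : r⁻¹ • y ∈ ball (0:E2) 1 ↔ y ∈ ball (0:E2) r := by
      simp only [mem_ball_zero_iff, norm_smul, norm_inv, Real.norm_eq_abs,
        abs_of_pos hr]
      rw [inv_mul_lt_iff₀ hr, mul_one]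
    by_cases hy : y ∈ ball (0:E2) r
    · rw [indicator_of_mem (hmem.2 hy), indicator_of_mem hy]
      rw [norm_smul, norm_inv, Real.norm_eq_abs, abs_of_pos hr, mul_inv, inv_inv]
    · rw [indicator_of_notMem (fun h => hy (hmem.1 h)), indicator_of_notMem hy,
        mul_zero]
  have hint2 : Integrable (fun y : E2 => g (r⁻¹ • y)) volume :=
    hg.comp_smul (inv_ne_zero hr.ne')
  have hintind : Integrable ((ball (0:E2) r).indicator (fun y : E2 => ‖y‖⁻¹)) volume := by
    have := (hint2.const_mul r⁻¹)
    have heq : (fun y : E2 => r⁻¹ * g (r⁻¹ • y))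
        = (ball (0:E2) r).indicator (fun y : E2 => ‖y‖⁻¹) := by
      funext y
      rw [hcomp y, ← mul_assoc, inv_mul_cancel₀ hr.ne', one_mul]
    rwa [heq] at this
  constructor
  · exact (integrable_indicator_iff measurableSet_ball).1 hintind
  · have hsc := MeasureTheory.Measure.integral_comp_smul (volume : Measure E2) g r⁻¹
    simp only [hcomp] at hsc
    rw [integral_const_mul] at hsc
    rw [← integral_indicator measurableSet_ball]
    have habs : |((r⁻¹ : ℝ) ^ Module.finrank ℝ E2)⁻¹| = r ^ 2 := by
      rw [finrank_E2, inv_pow, inv_inv, abs_of_pos (by positivity)]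
    rw [habs] at hsc
    rw [smul_eq_mul] at hsc
    have hgc : ∫ x, g x = c₀ := by
      rw [hgdef, integral_indicator measurableSet_ball]
      rfl
    rw [hgc] at hsc
    have : r * ∫ (a : E2), (ball 0 r).indicator (fun y => ‖y‖⁻¹) a = r * (r * c₀) := by
      rw [hsc]; ring
    exact mul_left_cancel₀ hr.ne' this

lemma inv_norm_ball_translate (x : E2) (r : ℝ) (hr : 0 < r) :
    Integrable ((ball x r).indicator (fun y : E2 => ‖x - y‖⁻¹)) volume ∧
    ∫ y, (ball x r).indicator (fun y : E2 => ‖x - y‖⁻¹) y = r * c₀ := by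
  set g : E2 → ℝ := (ball (0:E2) r).indicator (fun y => ‖y‖⁻¹) with hgdef
  have hg : Integrable g volume :=
    (integrable_indicator_iff measurableSet_ball).2 (inv_norm_ball_scale r hr).1
  have hcomp : ∀ y : E2, g (x - y) = (ball x r).indicator (fun y : E2 => ‖x - y‖⁻¹) y := by
    intro y
    simp only [hgdef]
    have hmem : x - y ∈ ball (0:E2) r ↔ y ∈ ball x r := by
      rw [mem_ball_zero_iff, mem_ball, dist_eq_norm, ← norm_neg (x - y), neg_sub]
    by_cases hy : y ∈ ball x r
    · rw [indicator_of_mem (hmem.2 hy), indicator_of_mem hy]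
    · rw [indicator_of_notMem (fun h => hy (hmem.1 h)), indicator_of_notMem hy]
  constructor
  · have : Integrable (fun y : E2 => g (x - y)) volume :=
      (integrable_comp_sub_left _ x).2 hg
    simpa only [hcomp] using this
  · have := integral_sub_left_eq_self g (volume : Measure E2) x
    simp only [hcomp] at this
    rw [this, hgdef, integral_indicator measurableSet_ball]
    exact (inv_norm_ball_scale r hr).2

lemma measurable_greenG (x : E2) : Measurable (fun y : E2 => greenG x y) := by
  unfold greenG greenh
  have h1 : Measurable (fun y : E2 => Real.log ‖x - y‖) :=
    Real.measurable_log.comp (measurable_const.sub measurable_id).norm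
  have h2 : Measurable (fun y : E2 => Real.log ‖y‖) :=
    Real.measurable_log.comp measurable_norm
  have h3 : Measurable (fun y : E2 => Real.log ‖x - (‖y‖^2)⁻¹ • y‖) := by
    apply Real.measurable_log.comp
    apply Measurable.norm
    exact measurable_const.sub (((measurable_norm.pow_const 2).inv).smul measurable_id)
  fun_prop

-- inversion lower bound
lemma inv_point_dist_ge (x y : E2) (hx : ‖x‖ ≤ 1) (hy : ‖y‖ ≤ 1) (hy0 : y ≠ 0) :
    ‖x - y‖ ≤ ‖x - (‖y‖^2)⁻¹ • y‖ := by
  have hyn : 0 < ‖y‖ := norm_pos_iff.2 hy0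
  have h1 : ‖x - y‖^2 = ‖x‖^2 - 2 * (inner ℝ x y : ℝ) + ‖y‖^2 := norm_sub_sq_real x y
  have h2 : ‖x - (‖y‖^2)⁻¹ • y‖^2
      = ‖x‖^2 - 2 * ((‖y‖^2)⁻¹ * (inner ℝ x y : ℝ)) + (‖y‖^2)⁻¹ := by
    rw [norm_sub_sq_real, real_inner_smul_right, norm_smul]
    congr 1
    rw [Real.norm_eq_abs, abs_of_pos (show (0:ℝ) < (‖y‖^2)⁻¹ by positivity), mul_pow]
    have hne : (‖y‖:ℝ)^2 ≠ 0 := by positivity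
    field_simp
  have hx2 : ‖x‖^2 ≤ 1 := by nlinarith [norm_nonneg x]
  have hy2 : ‖y‖^2 ≤ 1 := by nlinarith [norm_nonneg y]
  have hkey : ‖x - y‖^2 ≤ ‖y‖^2 * ‖x - (‖y‖^2)⁻¹ • y‖^2 := by
    have h5 : ‖y‖^2 * (‖x‖^2 - 2*((‖y‖^2)⁻¹ * (inner ℝ x y : ℝ)) + (‖y‖^2)⁻¹)
        = ‖y‖^2*‖x‖^2 - 2*(inner ℝ x y : ℝ) + 1 := by
      have hne : (‖y‖:ℝ)^2 ≠ 0 := by positivity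
      field_simp
    rw [h1, h2, h5]
    nlinarith [mul_nonneg (sub_nonneg.2 hx2) (sub_nonneg.2 hy2)]
  have h4 : ‖x - y‖^2 ≤ ‖x - (‖y‖^2)⁻¹ • y‖^2 := by
    calc ‖x - y‖^2 ≤ ‖y‖^2 * ‖x - (‖y‖^2)⁻¹ • y‖^2 := hkey
      _ ≤ 1 * ‖x - (‖y‖^2)⁻¹ • y‖^2 := mul_le_mul_of_nonneg_right hy2 (sq_nonneg _)
      _ = _ := one_mul _
  have h5 := Real.sqrt_le_sqrt h4
  rwa [Real.sqrt_sq (norm_nonneg _), Real.sqrt_sq (norm_nonneg _)] at h5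

lemma inv_point_dist_le (x y : E2) (hy0 : y ≠ 0) :
    ‖x - (‖y‖^2)⁻¹ • y‖ ≤ ‖x‖ + ‖y‖⁻¹ := by
  have hyn : 0 < ‖y‖ := norm_pos_iff.2 hy0
  calc ‖x - (‖y‖^2)⁻¹ • y‖ ≤ ‖x‖ + ‖(‖y‖^2)⁻¹ • y‖ := norm_sub_le _ _
    _ = ‖x‖ + ‖y‖⁻¹ := by
        rw [norm_smul, Real.norm_eq_abs, abs_of_pos (by positivity), sq,
          mul_inv, mul_assoc, inv_mul_cancel₀ hyn.ne', mul_one]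

lemma abs_log_le (a : ℝ) (ha : 0 < a) : |Real.log a| ≤ a⁻¹ + a := by
  rcases le_or_gt a 1 with h | h
  · have h1 : Real.log a ≤ 0 := Real.log_nonpos ha.le h
    rw [abs_of_nonpos h1]
    have h2 : Real.log a⁻¹ ≤ a⁻¹ - 1 := Real.log_le_sub_one_of_pos (by positivity)
    rw [Real.log_inv] at h2
    linarith
  · have h1 : 0 ≤ Real.log a := Real.log_nonneg h.le
    rw [abs_of_nonneg h1]
    have h2 : Real.log a ≤ a - 1 := Real.log_le_sub_one_of_pos ha
    have : 0 < a⁻¹ := by positivity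
    linarith

lemma abs_log_sub_le (a b : ℝ) (ha : 0 < a) (hb : 0 < b) :
    |Real.log a - Real.log b| ≤ |a - b| * (a⁻¹ + b⁻¹) := by
  have key : ∀ u v : ℝ, 0 < u → 0 < v → v ≤ u →
      Real.log u - Real.log v ≤ (u - v) * v⁻¹ := by
    intro u v hu hv huv
    have h1 : Real.log (u/v) ≤ u/v - 1 := Real.log_le_sub_one_of_pos (div_pos hu hv)
    rw [Real.log_div hu.ne' hv.ne'] at h1
    have : u/v - 1 = (u - v) * v⁻¹ := by field_simp
    linarith [this ▸ h1]
  rcases le_total b a with h | h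
  · rw [abs_of_nonneg (by rw [sub_nonneg]; exact Real.log_le_log hb h),
      abs_of_nonneg (by linarith)]
    have := key a b ha hb h
    nlinarith [key a b ha hb h, inv_nonneg.2 ha.le, inv_nonneg.2 hb.le, sub_nonneg.2 h]
  · rw [abs_of_nonpos (by rw [sub_nonpos]; exact Real.log_le_log ha h),
      abs_of_nonpos (by linarith)]
    have := key b a hb ha h
    nlinarith [inv_nonneg.2 ha.le, inv_nonneg.2 hb.le, sub_nonneg.2 h]

lemma greenG_diff_bound (x x' y : E2) (hx : ‖x‖ < 1) (hx' : ‖x'‖ < 1) (hy : ‖y‖ < 1)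
    (hy0 : y ≠ 0) (hxy : y ≠ x) (hxy' : y ≠ x') :
    |greenG x y - greenG x' y|
      ≤ (1/π) * (‖x - y‖⁻¹ + ‖x' - y‖⁻¹) * ‖x - x'‖ := by
  have hπ : (0:ℝ) < π := Real.pi_pos
  set a := ‖x - y‖ with ha_def
  set b := ‖x' - y‖ with hb_def
  set as := ‖x - (‖y‖^2)⁻¹ • y‖ with has_def
  set bs := ‖x' - (‖y‖^2)⁻¹ • y‖ with hbs_def
  have ha : 0 < a := norm_pos_iff.2 (sub_ne_zero.2 (Ne.symm hxy))
  have hb : 0 < b := norm_pos_iff.2 (sub_ne_zero.2 (Ne.symm hxy'))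
  have haas : a ≤ as := inv_point_dist_ge x y hx.le hy.le hy0
  have hbbs : b ≤ bs := inv_point_dist_ge x' y hx'.le hy.le hy0
  have has : 0 < as := lt_of_lt_of_le ha haas
  have hbs : 0 < bs := lt_of_lt_of_le hb hbbs
  have hdab : |a - b| ≤ ‖x - x'‖ := by
    have h := abs_norm_sub_norm_le (x - y) (x' - y)
    rwa [sub_sub_sub_cancel_right] at h
  have hdasbs : |as - bs| ≤ ‖x - x'‖ := by
    have h := abs_norm_sub_norm_le (x - (‖y‖^2)⁻¹ • y) (x' - (‖y‖^2)⁻¹ • y)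
    rwa [sub_sub_sub_cancel_right] at h
  have hinv_as : as⁻¹ ≤ a⁻¹ := inv_anti₀ ha haas
  have hinv_bs : bs⁻¹ ≤ b⁻¹ := inv_anti₀ hb hbbs
  have hdiff : greenG x y - greenG x' y
      = (1/(2*π)) * (Real.log b - Real.log a)
        + (1/(2*π)) * (Real.log as - Real.log bs) := by
    unfold greenG greenh
    rw [← ha_def, ← hb_def, ← has_def, ← hbs_def]
    ring
  have hc : (0:ℝ) < 1/(2*π) := by positivity
  have t1 : |Real.log b - Real.log a| ≤ ‖x - x'‖ * (a⁻¹ + b⁻¹) := by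
    calc |Real.log b - Real.log a| ≤ |b - a| * (b⁻¹ + a⁻¹) := abs_log_sub_le b a hb ha
      _ ≤ ‖x - x'‖ * (b⁻¹ + a⁻¹) := by
          apply mul_le_mul_of_nonneg_right _ (by positivity)
          rw [abs_sub_comm] at hdab; exact hdab
      _ = ‖x - x'‖ * (a⁻¹ + b⁻¹) := by ring
  have t2 : |Real.log as - Real.log bs| ≤ ‖x - x'‖ * (a⁻¹ + b⁻¹) := by
    calc |Real.log as - Real.log bs| ≤ |as - bs| * (as⁻¹ + bs⁻¹) := abs_log_sub_le as bs has hbs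
      _ ≤ ‖x - x'‖ * (as⁻¹ + bs⁻¹) := mul_le_mul_of_nonneg_right hdasbs (by positivity)
      _ ≤ ‖x - x'‖ * (a⁻¹ + b⁻¹) := by
          apply mul_le_mul_of_nonneg_left _ (norm_nonneg _)
          linarith
  calc |greenG x y - greenG x' y|
      ≤ (1/(2*π)) * |Real.log b - Real.log a| + (1/(2*π)) * |Real.log as - Real.log bs| := by
        rw [hdiff]
        calc |(1/(2*π)) * (Real.log b - Real.log a) + (1/(2*π)) * (Real.log as - Real.log bs)|
            ≤ |(1/(2*π)) * (Real.log b - Real.log a)|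
              + |(1/(2*π)) * (Real.log as - Real.log bs)| := abs_add_le _ _
          _ = _ := by rw [abs_mul, abs_mul, abs_of_pos hc]
    _ ≤ (1/(2*π)) * (‖x - x'‖ * (a⁻¹ + b⁻¹)) + (1/(2*π)) * (‖x - x'‖ * (a⁻¹ + b⁻¹)) := by
        gcongr
    _ = (1/π) * (a⁻¹ + b⁻¹) * ‖x - x'‖ := by field_simp; ring

lemma greenG_abs_bound (x y : E2) (hx : ‖x‖ < 1) (hy : ‖y‖ < 1)
    (hy0 : y ≠ 0) (hxy : y ≠ x) :
    |greenG x y| ≤ 2 * (‖x - y‖⁻¹ + ‖y‖⁻¹ + 2) := by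
  have hπ : (3:ℝ) < π := Real.pi_gt_three
  set a := ‖x - y‖ with ha_def
  set t := ‖y‖ with ht_def
  set as := ‖x - (‖y‖^2)⁻¹ • y‖ with has_def
  have ha : 0 < a := norm_pos_iff.2 (sub_ne_zero.2 (Ne.symm hxy))
  have ht : 0 < t := norm_pos_iff.2 hy0
  have haas : a ≤ as := inv_point_dist_ge x y hx.le hy.le hy0
  have has : 0 < as := lt_of_lt_of_le ha haas
  have hasle : as ≤ 1 + t⁻¹ := by
    have := inv_point_dist_le x y hy0
    rw [← has_def, ← ht_def] at this
    linarith
  have hinv_as : as⁻¹ ≤ a⁻¹ := inv_anti₀ ha haas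
  have ha2 : a ≤ 2 := by
    calc a ≤ ‖x‖ + ‖y‖ := norm_sub_le _ _
      _ ≤ 2 := by linarith
  have l1 : |Real.log a| ≤ a⁻¹ + 2 := le_trans (abs_log_le a ha) (by linarith)
  have l2 : |Real.log t| ≤ t⁻¹ + 1 := le_trans (abs_log_le t ht) (by linarith)
  have l3 : |Real.log as| ≤ a⁻¹ + t⁻¹ + 1 := le_trans (abs_log_le as has) (by linarith)
  have hG : |greenG x y| ≤ (1/(2*π)) * (|Real.log a| + |Real.log t| + |Real.log as|) := by
    have hexp : greenG x y
        = (1/(2*π)) * (-Real.log a + Real.log t + Real.log as) := by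
      unfold greenG greenh
      rw [← ha_def, ← ht_def, ← has_def]
      ring
    rw [hexp, abs_mul, abs_of_pos (show (0:ℝ) < 1/(2*π) by positivity)]
    apply mul_le_mul_of_nonneg_left _ (by positivity)
    calc |(-Real.log a + Real.log t + Real.log as)|
        ≤ |(-Real.log a + Real.log t)| + |Real.log as| := abs_add_le _ _
      _ ≤ |(-Real.log a)| + |Real.log t| + |Real.log as| := by
          have := abs_add_le (-Real.log a) (Real.log t)
          linarith
      _ = _ := by rw [abs_neg]
  have hsum : |Real.log a| + |Real.log t| + |Real.log as| ≤ 2*a⁻¹ + 2*t⁻¹ + 4 := by linarith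
  have hcle : (1/(2*π)) ≤ 1 := by
    rw [div_le_one (by linarith)]
    linarith
  calc |greenG x y| ≤ (1/(2*π)) * (|Real.log a| + |Real.log t| + |Real.log as|) := hG
    _ ≤ 1 * (2*a⁻¹ + 2*t⁻¹ + 4) := by
        apply mul_le_mul hcle hsum (by positivity) one_pos.le
    _ = 2 * (a⁻¹ + t⁻¹ + 2) := by ring

lemma ae_muD_mem : ∀ᵐ y ∂muD, y ∈ diskD := by
  rw [muD]
  exact ae_restrict_mem measurableSet_ball

lemma ae_muD_ne (x : E2) : ∀ᵐ y ∂muD, y ≠ x := by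
  rw [ae_iff]
  have : {y : E2 | ¬ y ≠ x} = {x} := by ext y; simp
  rw [this]
  exact le_antisymm (le_trans (Measure.restrict_le_self _) (by simp)) zero_le

lemma meas_inv_norm_sub (x : E2) : Measurable (fun y : E2 => ‖x - y‖⁻¹) :=
  ((measurable_const.sub measurable_id).norm).inv

lemma w_integrable {w : E2 → ℝ} {lam : ℝ}
    (hw : AEMeasurable w muD) (hb : ∀ᵐ y ∂muD, 0 ≤ w y ∧ w y ≤ lam) :
    Integrable w muD := by
  apply Integrable.mono' (integrable_const lam) hw.aestronglyMeasurable
  filter_upwards [hb] with y hy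
  rw [Real.norm_eq_abs, abs_of_nonneg hy.1]
  exact hy.2

lemma inv_norm_sub_integrable (x : E2) (hx : ‖x‖ < 1) :
    Integrable (fun y : E2 => ‖x - y‖⁻¹) muD := by
  have h2 := (inv_norm_ball_translate x 2 two_pos).1
  apply Integrable.mono' h2.restrict (meas_inv_norm_sub x).aestronglyMeasurable
  filter_upwards [ae_muD_mem] with y hy
  have hmem : y ∈ ball x 2 := by
    rw [mem_ball, dist_eq_norm]
    have h1 : ‖y‖ < 1 := mem_ball_zero_iff.1 hy
    calc ‖y - x‖ ≤ ‖y‖ + ‖x‖ := norm_sub_le _ _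
      _ < 2 := by linarith
  show ‖(‖x - y‖⁻¹ : ℝ)‖ ≤ (ball x 2).indicator (fun y => ‖x - y‖⁻¹) y
  rw [indicator_of_mem hmem (fun y => ‖x - y‖⁻¹), Real.norm_eq_abs,
    abs_of_nonneg (by positivity : (0:ℝ) ≤ ‖x - y‖⁻¹)]

lemma inv_norm_integrable : Integrable (fun y : E2 => ‖y‖⁻¹) muD := by
  unfold muD diskD
  exact integrableOn_inv_norm_ball_one

lemma greenG_mul_integrable {w : E2 → ℝ} {lam : ℝ} (x : E2) (hx : ‖x‖ < 1) (hlam0 : 0 ≤ lam)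
    (hw : AEMeasurable w muD) (hb : ∀ᵐ y ∂muD, 0 ≤ w y ∧ w y ≤ lam) :
    Integrable (fun y => greenG x y * w y) muD := by
  have h1 : Integrable (fun y : E2 => ‖x - y‖⁻¹ + (‖y‖⁻¹ + 2)) muD :=
    (inv_norm_sub_integrable x hx).add (inv_norm_integrable.add (integrable_const 2))
  have hgint : Integrable (fun y => lam * (2 * (‖x - y‖⁻¹ + (‖y‖⁻¹ + 2)))) muD :=
    (h1.const_mul 2).const_mul lam
  apply Integrable.mono' hgint ((measurable_greenG x).aemeasurable.mul hw).aestronglyMeasurable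
  filter_upwards [ae_muD_mem, ae_muD_ne x, ae_muD_ne 0, hb] with y hyD hyx hy0 hyb
  have hy1 : ‖y‖ < 1 := mem_ball_zero_iff.1 hyD
  rw [Real.norm_eq_abs, Pi.mul_apply, abs_mul, abs_of_nonneg hyb.1]
  calc |greenG x y| * w y ≤ (2 * (‖x - y‖⁻¹ + ‖y‖⁻¹ + 2)) * lam := by
        apply mul_le_mul (greenG_abs_bound x y hx hy1 hy0 hyx) hyb.2 hyb.1 (by positivity)
    _ = lam * (2 * (‖x - y‖⁻¹ + (‖y‖⁻¹ + 2))) := by ring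

lemma T_bound (x : E2) {w : E2 → ℝ} {lam : ℝ} (hlam : 0 < lam)
    (hw : AEMeasurable w muD) (hb : ∀ᵐ y ∂muD, 0 ≤ w y ∧ w y ≤ lam)
    (hi : ∫ y, w y ∂muD = 1) :
    Integrable (fun y => w y * ‖x - y‖⁻¹) muD ∧
    ∫ y, w y * ‖x - y‖⁻¹ ∂muD ≤ (c₀ + 1) * Real.sqrt lam := by
  have hs : 0 < Real.sqrt lam := Real.sqrt_pos.2 hlam
  have hr : 0 < (Real.sqrt lam)⁻¹ := by positivity
  have hwint : Integrable w muD := w_integrable hw hb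
  have hindint : Integrable ((ball x (Real.sqrt lam)⁻¹).indicator (fun y => ‖x - y‖⁻¹)) muD :=
    (inv_norm_ball_translate x _ hr).1.restrict
  have hgint : Integrable
      (fun y => lam * (ball x (Real.sqrt lam)⁻¹).indicator (fun y => ‖x - y‖⁻¹) y
        + w y * Real.sqrt lam) muD := (hindint.const_mul lam).add (hwint.mul_const _)
  have hptw : ∀ᵐ y ∂muD, w y * ‖x - y‖⁻¹
      ≤ lam * (ball x (Real.sqrt lam)⁻¹).indicator (fun y => ‖x - y‖⁻¹) y
        + w y * Real.sqrt lam := by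
    filter_upwards [hb] with y hy
    by_cases hmem : y ∈ ball x (Real.sqrt lam)⁻¹
    · rw [indicator_of_mem hmem]
      have h1 : w y * ‖x - y‖⁻¹ ≤ lam * ‖x - y‖⁻¹ :=
        mul_le_mul_of_nonneg_right hy.2 (by positivity)
      have h2 : 0 ≤ w y * Real.sqrt lam := mul_nonneg hy.1 hs.le
      linarith
    · rw [indicator_of_notMem hmem, mul_zero, zero_add]
      have hd : (Real.sqrt lam)⁻¹ ≤ ‖x - y‖ := by
        rw [mem_ball, dist_eq_norm] at hmem
        push_neg at hmem
        rwa [← norm_neg (y - x), neg_sub] at hmem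
      have h1 : ‖x - y‖⁻¹ ≤ ((Real.sqrt lam)⁻¹)⁻¹ := inv_anti₀ hr hd
      rw [inv_inv] at h1
      exact mul_le_mul_of_nonneg_left h1 hy.1
  have hint : Integrable (fun y => w y * ‖x - y‖⁻¹) muD := by
    apply Integrable.mono' hgint (hw.mul (meas_inv_norm_sub x).aemeasurable).aestronglyMeasurable
    filter_upwards [hb, hptw] with y hy hple
    rw [Real.norm_eq_abs, Pi.mul_apply, abs_of_nonneg (mul_nonneg hy.1 (inv_nonneg.2 (norm_nonneg _)))]
    exact hple
  refine ⟨hint, ?_⟩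
  have hmono := integral_mono_ae hint hgint hptw
  have hind : ∫ y, (ball x (Real.sqrt lam)⁻¹).indicator (fun y => ‖x - y‖⁻¹) y ∂muD
      ≤ (Real.sqrt lam)⁻¹ * c₀ := by
    rw [← (inv_norm_ball_translate x _ hr).2]
    apply integral_mono_measure Measure.restrict_le_self ?_ (inv_norm_ball_translate x _ hr).1
    apply Eventually.of_forall
    intro y
    apply indicator_nonneg
    intro z _
    positivity
  have hgval : (∫ y, (lam * (ball x (Real.sqrt lam)⁻¹).indicator (fun y => ‖x - y‖⁻¹) y
      + w y * Real.sqrt lam) ∂muD) ≤ (c₀ + 1) * Real.sqrt lam := by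
    rw [integral_add (hindint.const_mul lam) (hwint.mul_const _),
      integral_const_mul, integral_mul_const, hi, one_mul]
    have hxx : lam * (Real.sqrt lam)⁻¹ = Real.sqrt lam := by
      rw [inv_eq_one_div, mul_one_div, div_eq_iff hs.ne']
      exact (Real.mul_self_sqrt hlam.le).symm
    calc lam * ∫ y, (ball x (Real.sqrt lam)⁻¹).indicator (fun y => ‖x - y‖⁻¹) y ∂muD
          + Real.sqrt lam
        ≤ lam * ((Real.sqrt lam)⁻¹ * c₀) + Real.sqrt lam :=
          add_le_add (mul_le_mul_of_nonneg_left hind hlam.le) le_rfl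
      _ = (lam * (Real.sqrt lam)⁻¹) * c₀ + Real.sqrt lam := by ring
      _ = (c₀ + 1) * Real.sqrt lam := by rw [hxx]; ring
  linarith

lemma pot_lipschitz {w : E2 → ℝ} {lam : ℝ} (hlam : 0 < lam)
    (hw : AEMeasurable w muD) (hb : ∀ᵐ y ∂muD, 0 ≤ w y ∧ w y ≤ lam)
    (hi : ∫ y, w y ∂muD = 1) (x x' : E2) (hx : ‖x‖ < 1) (hx' : ‖x'‖ < 1) :
    |(∫ y, greenG x y * w y ∂muD) - ∫ y, greenG x' y * w y ∂muD|
      ≤ (2*(c₀+1)/π) * Real.sqrt lam * ‖x - x'‖ := by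
  have hπ : (0:ℝ) < π := Real.pi_pos
  have hI := greenG_mul_integrable x hx hlam.le hw hb
  have hI' := greenG_mul_integrable x' hx' hlam.le hw hb
  rw [← integral_sub hI hI']
  have hTx := T_bound x hlam hw hb hi
  have hTx' := T_bound x' hlam hw hb hi
  have hgint : Integrable (fun y => (1/π) * ‖x - x'‖ * (w y * ‖x - y‖⁻¹)
      + (1/π) * ‖x - x'‖ * (w y * ‖x' - y‖⁻¹)) muD :=
    (hTx.1.const_mul _).add (hTx'.1.const_mul _)
  have habs : ∀ᵐ y ∂muD, ‖greenG x y * w y - greenG x' y * w y‖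
      ≤ (1/π) * ‖x - x'‖ * (w y * ‖x - y‖⁻¹)
        + (1/π) * ‖x - x'‖ * (w y * ‖x' - y‖⁻¹) := by
    filter_upwards [ae_muD_mem, ae_muD_ne x, ae_muD_ne x', ae_muD_ne 0, hb]
      with y hyD hyx hyx' hy0 hyb
    have hy1 : ‖y‖ < 1 := mem_ball_zero_iff.1 hyD
    have hG := greenG_diff_bound x x' y hx hx' hy1 hy0 hyx hyx'
    have heq : greenG x y * w y - greenG x' y * w y
        = (greenG x y - greenG x' y) * w y := by ring
    rw [heq, Real.norm_eq_abs, abs_mul, abs_of_nonneg hyb.1]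
    calc |greenG x y - greenG x' y| * w y
        ≤ ((1/π) * (‖x - y‖⁻¹ + ‖x' - y‖⁻¹) * ‖x - x'‖) * w y :=
          mul_le_mul_of_nonneg_right hG hyb.1
      _ = _ := by ring
  rw [← Real.norm_eq_abs]
  calc ‖∫ y, (greenG x y * w y - greenG x' y * w y) ∂muD‖
      ≤ ∫ y, ((1/π) * ‖x - x'‖ * (w y * ‖x - y‖⁻¹)
          + (1/π) * ‖x - x'‖ * (w y * ‖x' - y‖⁻¹)) ∂muD :=
        norm_integral_le_of_norm_le hgint habs
    _ = (1/π) * ‖x - x'‖ * (∫ y, w y * ‖x - y‖⁻¹ ∂muD)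
        + (1/π) * ‖x - x'‖ * (∫ y, w y * ‖x' - y‖⁻¹ ∂muD) := by
        rw [integral_add (hTx.1.const_mul _) (hTx'.1.const_mul _),
          integral_const_mul, integral_const_mul]
    _ ≤ (1/π) * ‖x - x'‖ * ((c₀ + 1) * Real.sqrt lam)
        + (1/π) * ‖x - x'‖ * ((c₀ + 1) * Real.sqrt lam) := by
        have hnn : (0:ℝ) ≤ (1/π) * ‖x - x'‖ := by positivity
        exact add_le_add (mul_le_mul_of_nonneg_left hTx.2 hnn)
          (mul_le_mul_of_nonneg_left hTx'.2 hnn)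
    _ = (2*(c₀+1)/π) * Real.sqrt lam * ‖x - x'‖ := by field_simp; ring

lemma psi_lipschitz (Ω mulam lam : ℝ) (hΩ : 0 ≤ Ω) (hlam : 0 < lam) {w : E2 → ℝ}
    (hw : AEMeasurable w muD) (hb : ∀ᵐ y ∂muD, 0 ≤ w y ∧ w y ≤ lam)
    (hi : ∫ y, w y ∂muD = 1) :
    LipschitzOnWith (Real.toNNReal ((2*(c₀+1)/π) * Real.sqrt lam + Ω))
      (psiFun Ω mulam w) diskD := by
  have hπ : (0:ℝ) < π := Real.pi_pos
  have hA : 0 ≤ (2*(c₀+1)/π) * Real.sqrt lam := by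
    apply mul_nonneg _ (Real.sqrt_nonneg _)
    apply div_nonneg _ hπ.le
    linarith [c₀_nonneg]
  rw [lipschitzOnWith_iff_dist_le_mul]
  intro x hx x' hx'
  rw [Real.coe_toNNReal _ (by linarith), Real.dist_eq, dist_eq_norm]
  have hx1 : ‖x‖ < 1 := mem_ball_zero_iff.1 hx
  have hx1' : ‖x'‖ < 1 := mem_ball_zero_iff.1 hx'
  have hconv : ∀ z : E2, (∫ y in diskD, greenG z y * w y) = ∫ y, greenG z y * w y ∂muD :=
    fun z => by rw [muD]
  have key : psiFun Ω mulam w x - psiFun Ω mulam w x'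
      = ((∫ y, greenG x y * w y ∂muD) - ∫ y, greenG x' y * w y ∂muD)
        + (Ω/2) * (‖x‖^2 - ‖x'‖^2) := by
    unfold psiFun
    rw [hconv x, hconv x']
    ring
  have hu := pot_lipschitz hlam hw hb hi x x' hx1 hx1'
  have hsq : |‖x‖^2 - ‖x'‖^2| ≤ 2 * ‖x - x'‖ := by
    have e : ‖x‖^2 - ‖x'‖^2 = (‖x‖ - ‖x'‖) * (‖x‖ + ‖x'‖) := by ring
    rw [e, abs_mul]
    have h1 : |‖x‖ - ‖x'‖| ≤ ‖x - x'‖ := abs_norm_sub_norm_le x x'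
    have h2 : |‖x‖ + ‖x'‖| ≤ 2 := by
      rw [abs_of_nonneg (by positivity)]
      linarith
    calc |‖x‖ - ‖x'‖| * |‖x‖ + ‖x'‖| ≤ ‖x - x'‖ * 2 :=
          mul_le_mul h1 h2 (abs_nonneg _) (norm_nonneg _)
      _ = 2 * ‖x - x'‖ := by ring
  calc |psiFun Ω mulam w x - psiFun Ω mulam w x'|
      ≤ |(∫ y, greenG x y * w y ∂muD) - ∫ y, greenG x' y * w y ∂muD|
        + (Ω/2) * |‖x‖^2 - ‖x'‖^2| := by
        rw [key]
        calc |_ + (Ω/2) * (‖x‖^2 - ‖x'‖^2)| ≤ _ + |(Ω/2) * (‖x‖^2 - ‖x'‖^2)| := abs_add_le _ _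
          _ = _ + (Ω/2) * |‖x‖^2 - ‖x'‖^2| := by
              rw [abs_mul, abs_of_nonneg (by linarith : (0:ℝ) ≤ Ω/2)]
    _ ≤ (2*(c₀+1)/π) * Real.sqrt lam * ‖x - x'‖ + (Ω/2) * (2 * ‖x - x'‖) := by
        exact add_le_add hu (mul_le_mul_of_nonneg_left hsq (by linarith))
    _ = ((2*(c₀+1)/π) * Real.sqrt lam + Ω) * ‖x - x'‖ := by ring

lemma isOpen_diskD : IsOpen diskD := by unfold diskD; exact Metric.isOpen_ball

theorem stmt13 (Ω : ℝ) (hΩ : 0 < Ω) :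
    ∃ C : ℝ, ∀ (lam mulam : ℝ) (wlam : E2 → ℝ),
      max (1/π) (2*Ω) < lam →
      wlam ∈ Kset lam →
      (∀ v ∈ Kset lam, calE Ω v ≤ calE Ω wlam) →
      wlam =ᵐ[muD] (fun x =>
        lam * Set.indicator {x ∈ diskD | 0 < psiFun Ω mulam wlam x} (fun _ => (1:ℝ)) x) →
      coreT Ω mulam wlam ≤ C := by
  have hπ : (0:ℝ) < π := Real.pi_pos
  refine ⟨2*(2*(c₀+1)/π)^2 + 2*π*Ω^2, ?_⟩
  intro lam mulam wlam hlam hK hmax hchar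
  obtain ⟨hwm, hwb, hwint⟩ := hK
  have hlam0 : 0 < lam := by
    have h1 : (0:ℝ) < 1/π := by positivity
    exact lt_trans h1 (lt_of_le_of_lt (le_max_left _ _) hlam)
  set A : ℝ := 2*(c₀+1)/π with hA_def
  have hA : 0 ≤ A := by
    apply div_nonneg _ hπ.le
    linarith [c₀_nonneg]
  set L : ℝ := A * Real.sqrt lam + Ω with hL_def
  have hL : 0 ≤ L := by
    have := mul_nonneg hA (Real.sqrt_nonneg lam)
    linarith
  set ψ : E2 → ℝ := psiFun Ω mulam wlam with hψ_def
  set F : E2 → ℝ := fun z => max (psiFun Ω mulam wlam z) 0 with hF_def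
  have hψlip : LipschitzOnWith (Real.toNNReal L) ψ diskD :=
    psi_lipschitz Ω mulam lam hΩ.le hlam0 hwm hwb hwint
  have hFlip : LipschitzOnWith (Real.toNNReal L) F diskD := by
    rw [lipschitzOnWith_iff_dist_le_mul] at hψlip ⊢
    intro x hx x' hx'
    have h1 := hψlip x hx x' hx'
    calc dist (F x) (F x') = |max (ψ x) 0 - max (ψ x') 0| := Real.dist_eq _ _
      _ ≤ |ψ x - ψ x'| := abs_max_sub_max_le_abs _ _ _
      _ = dist (ψ x) (ψ x') := (Real.dist_eq _ _).symm
      _ ≤ _ := h1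
  set S : Set E2 := {x ∈ diskD | 0 < psiFun Ω mulam wlam x} with hS_def
  have hSeq : S = diskD ∩ ψ⁻¹' (Ioi 0) := by
    ext z
    simp [hS_def, Set.mem_sep_iff, mem_preimage, mem_Ioi, hψ_def]
  have hSopen : IsOpen S := by
    rw [hSeq]
    exact hψlip.continuousOn.isOpen_inter_preimage isOpen_diskD isOpen_Ioi
  have hSmeas : MeasurableSet S := hSopen.measurableSet
  have hSsub : S ⊆ diskD := fun z hz => hz.1
  -- volume of S
  have hm : lam * (volume S).toReal = 1 := by
    have h1 : ∫ x, wlam x ∂muD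
        = ∫ x, lam * S.indicator (fun _ => (1:ℝ)) x ∂muD := integral_congr_ae hchar
    rw [hwint] at h1
    rw [integral_const_mul] at h1
    have h2 : S.indicator (fun _ => (1:ℝ)) = S.indicator (1 : E2 → ℝ) := rfl
    rw [h2, integral_indicator_one hSmeas] at h1
    have h3 : muD S = volume S := by
      rw [muD, Measure.restrict_apply hSmeas, inter_eq_self_of_subset_left hSsub]
    rw [measureReal_def, h3] at h1
    exact h1.symm
  -- pointwise bound on the integrand
  have hb2 : ∀ᵐ x ∂muD, (pd 0 F x)^2 + (pd 1 F x)^2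
      ≤ (2*L^2) * S.indicator (fun _ => (1:ℝ)) x := by
    filter_upwards [ae_muD_mem] with x hxD
    by_cases hψx : 0 < ψ x
    · have hxS : x ∈ S := ⟨hxD, hψx⟩
      rw [indicator_of_mem hxS, mul_one]
      have hnb : ‖fderiv ℝ F x‖ ≤ L := by
        have h := norm_fderiv_le_of_lipschitzOn ℝ (isOpen_diskD.mem_nhds hxD) hFlip
        rwa [Real.coe_toNNReal _ hL] at h
      have hpd : ∀ i : Fin 2, |pd i F x| ≤ L := by
        intro i
        calc |pd i F x| = ‖fderiv ℝ F x (EuclideanSpace.single i 1)‖ :=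
              (Real.norm_eq_abs _).symm
          _ ≤ ‖fderiv ℝ F x‖ * ‖EuclideanSpace.single i (1:ℝ)‖ :=
              (fderiv ℝ F x).le_opNorm _
          _ = ‖fderiv ℝ F x‖ := by rw [EuclideanSpace.norm_single]; simp
          _ ≤ L := hnb
      have e0 : (pd 0 F x)^2 ≤ L^2 := by
        rw [← sq_abs]
        exact pow_le_pow_left₀ (abs_nonneg _) (hpd 0) 2
      have e1 : (pd 1 F x)^2 ≤ L^2 := by
        rw [← sq_abs]
        exact pow_le_pow_left₀ (abs_nonneg _) (hpd 1) 2
      linarith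
    · have hzero : ∀ i : Fin 2, pd i F x = 0 := by
        intro i
        have hFx : F x = 0 := by
          rw [hF_def]
          exact max_eq_right (not_lt.1 hψx)
        have hmin : IsLocalMin F x := by
          apply Filter.Eventually.of_forall
          intro z
          rw [hFx, hF_def]
          exact le_max_right _ _
        have hfz := hmin.fderiv_eq_zero
        show fderiv ℝ F x (EuclideanSpace.single i 1) = 0
        rw [hfz]
        rfl
      rw [hzero 0, hzero 1]
      have : (0:ℝ) ≤ (2*L^2) * S.indicator (fun _ => (1:ℝ)) x := by
        apply mul_nonneg (by positivity)
        exact indicator_nonneg (fun _ _ => zero_le_one) x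
      simpa using this
  -- integrability
  have hmeas0 : Measurable (fun x => pd 0 F x) :=
    measurable_fderiv_apply_const ℝ F (EuclideanSpace.single 0 1)
  have hmeas1 : Measurable (fun x => pd 1 F x) :=
    measurable_fderiv_apply_const ℝ F (EuclideanSpace.single 1 1)
  have hmeas_h : AEStronglyMeasurable (fun x => (pd 0 F x)^2 + (pd 1 F x)^2) muD :=
    (((hmeas0.pow_const 2).add (hmeas1.pow_const 2))).aestronglyMeasurable
  have hint_rhs : Integrable (fun x => (2*L^2) * S.indicator (fun _ => (1:ℝ)) x) muD :=
    (((integrable_const (1:ℝ)).indicator hSmeas)).const_mul _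
  have hint_h : Integrable (fun x => (pd 0 F x)^2 + (pd 1 F x)^2) muD := by
    apply Integrable.mono' (integrable_const (2*L^2)) hmeas_h
    filter_upwards [hb2] with x hx
    rw [Real.norm_eq_abs, abs_of_nonneg (by positivity)]
    calc (pd 0 F x)^2 + (pd 1 F x)^2 ≤ (2*L^2) * S.indicator (fun _ => (1:ℝ)) x := hx
      _ ≤ (2*L^2) * 1 := by
          apply mul_le_mul_of_nonneg_left _ (by positivity)
          by_cases hm : x ∈ S
          · rw [indicator_of_mem hm]
          · rw [indicator_of_notMem hm]; exact zero_le_one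
      _ = 2*L^2 := mul_one _
  -- integral comparison
  have hle := integral_mono_ae hint_h hint_rhs hb2
  have hrhs_val : ∫ x, (2*L^2) * S.indicator (fun _ => (1:ℝ)) x ∂muD
      = (2*L^2) * (volume S).toReal := by
    rw [integral_const_mul]
    congr 1
    have h2 : S.indicator (fun _ => (1:ℝ)) = S.indicator (1 : E2 → ℝ) := rfl
    rw [h2, integral_indicator_one hSmeas, muD, measureReal_def, Measure.restrict_apply hSmeas,
      inter_eq_self_of_subset_left hSsub]
  -- conclude
  have hcore : coreT Ω mulam wlam
      = (1/2) * ∫ x, ((pd 0 F x)^2 + (pd 1 F x)^2) ∂muD := by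
    unfold coreT
    rw [muD]
  rw [hcore]
  have hsq : Real.sqrt lam ^ 2 = lam := Real.sq_sqrt hlam0.le
  have hπlam : 1 < π * lam := by
    have h1 : 1/π < lam := lt_of_le_of_lt (le_max_left _ _) hlam
    rw [div_lt_iff₀ hπ] at h1
    linarith
  have hfinal : (1/2) * ((2*L^2) * (volume S).toReal) ≤ 2*A^2 + 2*π*Ω^2 := by
    have hvol : (volume S).toReal = 1/lam := by
      field_simp
      linarith [hm]
    have h1 : L^2 ≤ 2*A^2*lam + 2*Ω^2 := by
      nlinarith [sq_nonneg (A*Real.sqrt lam - Ω), hsq, hA, Real.sqrt_nonneg lam]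
    rw [hvol]
    have hgoal : (1/2) * ((2*L^2) * (1/lam)) = L^2 * (1/lam) := by ring
    rw [hgoal, mul_one_div, div_le_iff₀ hlam0]
    nlinarith [h1, mul_nonneg (sub_nonneg.2 hπlam.le) (sq_nonneg Ω), sq_nonneg Ω, hlam0.le]
  calc (1/2) * ∫ x, ((pd 0 F x)^2 + (pd 1 F x)^2) ∂muD
      ≤ (1/2) * ((2*L^2) * (volume S).toReal) := by
        apply mul_le_mul_of_nonneg_left _ (by norm_num)
        rw [← hrhs_val]
        exact hle
    _ ≤ 2*A^2 + 2*π*Ω^2 := hfinal
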